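/- Let A be an m×L matrix with entries in {0,1} and c ∈ ℕ^m with m ≥ 2. If A·x = c has a solution over ℕ, then it has a solution over ℕ with at most (5/2)·m·log₂ m + 1 non-zero entries. -/

import Mathlib

/-!
Take a solution `b` of `A x = c` whose support `S` is as small as possible, and let `s = #S`.
Every row of `A` sums to at most `s` over any `T ⊆ S`, so if `2 ^ s > (s + 1) ^ m` two distinct
subsets of `S`, hence two disjoint ones `D₁`, `D₂`, have the same column sums. Moving the mass
`min_{D₂} b` from `D₂` to `D₁` keeps `A b` fixed and empties one more coordinate, contradicting
minimality. Hence `2 ^ s ≤ (s + 1) ^ m`, and elementary estimates on `log` turn this into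
`s ≤ (5/2) m log₂ m + 1`.
-/

open Finset Matrix Real

namespace Matrix

variable {ι κ : Type*}

section Pigeonhole

variable [Fintype ι] [DecidableEq ι]

theorem exists_ne_sum_eq_of_succ_pow_lt {A : Matrix ι κ ℕ} (hA : ∀ i j, A i j ≤ 1)
    {S : Finset κ} (hS : (#S + 1) ^ Fintype.card ι < 2 ^ #S) :
    ∃ T₁ ⊆ S, ∃ T₂ ⊆ S, T₁ ≠ T₂ ∧ ∀ i, ∑ j ∈ T₁, A i j = ∑ j ∈ T₂, A i j := by
  have hmaps : ∀ T ∈ S.powerset,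
      (fun i => ∑ j ∈ T, A i j) ∈ Fintype.piFinset fun _ => range (#S + 1) := by
    intro T hT
    simp only [Fintype.mem_piFinset, mem_range, Nat.lt_succ_iff]
    intro i
    calc ∑ j ∈ T, A i j ≤ #T • 1 := sum_le_card_nsmul _ _ _ fun j _ => hA i j
      _ ≤ #S := by simpa using card_le_card (mem_powerset.mp hT)
  obtain ⟨T₁, hT₁, T₂, hT₂, hne, heq⟩ := exists_ne_map_eq_of_card_lt_of_maps_to
    (by simpa [Fintype.card_piFinset] using hS) hmaps
  exact ⟨T₁, mem_powerset.mp hT₁, T₂, mem_powerset.mp hT₂, hne, congrFun heq⟩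

theorem exists_disjoint_sum_eq_of_succ_pow_lt [DecidableEq κ] {A : Matrix ι κ ℕ}
    (hA : ∀ i j, A i j ≤ 1) {S : Finset κ} (hS : (#S + 1) ^ Fintype.card ι < 2 ^ #S) :
    ∃ D₁ D₂ : Finset κ, Disjoint D₁ D₂ ∧ D₂.Nonempty ∧ D₁ ∪ D₂ ⊆ S ∧
      ∀ i, ∑ j ∈ D₁, A i j = ∑ j ∈ D₂, A i j := by
  obtain ⟨T₁, hT₁, T₂, hT₂, hne, heq⟩ := exists_ne_sum_eq_of_succ_pow_lt hA hS
  have hsdiff : ∀ i, ∑ j ∈ T₁ \ T₂, A i j = ∑ j ∈ T₂ \ T₁, A i j :=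
    fun i => sum_sdiff_eq_sum_sdiff_iff.mpr (heq i)
  have hsub : ∀ {U V : Finset κ}, U ⊆ S → V ⊆ S → U \ V ∪ V \ U ⊆ S :=
    fun hU hV => union_subset (sdiff_subset.trans hU) (sdiff_subset.trans hV)
  rcases (T₂ \ T₁).eq_empty_or_nonempty with h₂₁ | h₂₁
  · refine ⟨T₂ \ T₁, T₁ \ T₂, disjoint_sdiff_sdiff, ?_, hsub hT₂ hT₁, fun i => (hsdiff i).symm⟩
    rw [nonempty_iff_ne_empty, Ne, sdiff_eq_empty_iff_subset]
    exact fun h => hne (h.antisymm (sdiff_eq_empty_iff_subset.mp h₂₁))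
  · exact ⟨T₁ \ T₂, T₂ \ T₁, disjoint_sdiff_sdiff, h₂₁, hsub hT₁ hT₂, hsdiff⟩

end Pigeonhole

theorem mulVec_indicator_const {R : Type*} [NonUnitalNonAssocSemiring R] [Fintype κ]
    (A : Matrix ι κ R) (D : Finset κ) (t : R) :
    A *ᵥ (D : Set κ).indicator (fun _ => t) = fun i => (∑ j ∈ D, A i j) * t := by
  classical
  ext i
  simp [mulVec, dotProduct, Set.indicator_apply, Finset.sum_mul]

variable [Fintype κ] [DecidableEq κ]

theorem exists_mulVec_eq_card_support_lt {A : Matrix ι κ ℕ} {b : κ → ℕ} {D₁ D₂ : Finset κ}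
    (hdisj : Disjoint D₁ D₂) (hD₂ : D₂.Nonempty)
    (hsum : ∀ i, ∑ j ∈ D₁, A i j = ∑ j ∈ D₂, A i j) (hb : ∀ j ∈ D₁ ∪ D₂, b j ≠ 0) :
    ∃ b', A *ᵥ b' = A *ᵥ b ∧ #{j | b' j ≠ 0} < #{j | b j ≠ 0} := by
  obtain ⟨j₀, hj₀, hmin⟩ := D₂.exists_min_image b hD₂
  set shift : Finset κ → κ → ℕ := fun D => (D : Set κ).indicator fun _ => b j₀
  have hshift : A *ᵥ shift D₁ = A *ᵥ shift D₂ := by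
    simp only [shift, mulVec_indicator_const, hsum]
  have hb_eq : b = (b - shift D₂) + shift D₂ := by
    ext j
    by_cases hj : j ∈ D₂ <;> simp [shift, hj, hmin j]
  refine ⟨b - shift D₂ + shift D₁, ?_, card_lt_card ?_⟩
  · rw [mulVec_add, hshift, ← mulVec_add, ← hb_eq]
  rw [ssubset_iff_of_subset]
  · refine ⟨j₀, by simpa using hb j₀ (mem_union_right _ hj₀), ?_⟩
    simp [shift, hj₀, disjoint_right.mp hdisj hj₀]
  · intro j
    simp only [mem_filter, mem_univ, true_and]
    intro hj
    contrapose! hj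
    have h₁ : j ∉ D₁ := fun h => hb j (mem_union_left _ h) hj
    have h₂ : j ∉ D₂ := fun h => hb j (mem_union_right _ h) hj
    simp [shift, h₁, h₂, hj]

theorem exists_mulVec_eq_two_pow_card_support_le [Fintype ι] [DecidableEq ι]
    {A : Matrix ι κ ℕ} (hA : ∀ i j, A i j ≤ 1) (b : κ → ℕ) :
    ∃ b', A *ᵥ b' = A *ᵥ b ∧
      2 ^ #{j | b' j ≠ 0} ≤ (#{j | b' j ≠ 0} + 1) ^ Fintype.card ι := by
  induction hs : #{j | b j ≠ 0} using Nat.strong_induction_on generalizing b with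
  | _ s ih =>
  by_cases hpow : 2 ^ s ≤ (s + 1) ^ Fintype.card ι
  · exact ⟨b, rfl, hs ▸ hpow⟩
  obtain ⟨D₁, D₂, hdisj, hD₂, hsub, hsum⟩ :=
    exists_disjoint_sum_eq_of_succ_pow_lt hA (S := {j | b j ≠ 0}) (hs ▸ not_le.mp hpow)
  obtain ⟨b₁, hb₁, hlt⟩ := exists_mulVec_eq_card_support_lt hdisj hD₂ hsum
    fun j hj => (mem_filter.mp (hsub hj)).2
  obtain ⟨b', hb', hpow'⟩ := ih _ (hs ▸ hlt) b₁ rfl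
  exact ⟨b', hb'.trans hb₁, hpow'⟩

end Matrix

namespace Real

/- By concavity, `m * log (x + 1)` stays below its tangent line at `a`, whose slope
`m / (a + 1)` is at most `c`. -/
theorem mul_log_add_one_lt_mul_of_le {m c a x : ℝ} (hm : 0 ≤ m) (ha : 0 ≤ a) (hax : a ≤ x)
    (hslope : m ≤ c * (a + 1)) (hval : m * log (a + 1) < c * a) :
    m * log (x + 1) < c * x := by
  have htangent : log (x + 1) ≤ log (a + 1) + (x - a) / (a + 1) := by
    have h := log_le_sub_one_of_pos
      (show 0 < (x + 1) / (a + 1) from div_pos (by linarith) (by linarith))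
    rw [log_div (by linarith) (by linarith)] at h
    have : (x + 1) / (a + 1) - 1 = (x - a) / (a + 1) := by field_simp; ring
    linarith
  have hslope' : m * ((x - a) / (a + 1)) ≤ c * (x - a) := by
    rw [← mul_div_assoc, div_le_iff₀ (by linarith)]
    nlinarith [mul_le_mul_of_nonneg_left hslope (sub_nonneg.2 hax)]
  calc m * log (x + 1) ≤ m * log (a + 1) + m * ((x - a) / (a + 1)) := by
        rw [← mul_add]; exact mul_le_mul_of_nonneg_left htangent hm
    _ < c * x := by linarith

end Real

noncomputable def sparsityBound (m : ℝ) : ℝ := 5 / 2 * m * logb 2 m + 1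

theorem sparsityBound_nonneg {m : ℝ} (hm : 1 ≤ m) : 0 ≤ sparsityBound m := by
  have : 0 ≤ logb 2 m := logb_nonneg one_lt_two hm
  unfold sparsityBound
  positivity

theorem log_two_mul_sparsityBound (m : ℝ) :
    log 2 * sparsityBound m = 5 / 2 * m * log m + log 2 := by
  rw [sparsityBound, logb, mul_add, mul_one]
  field_simp

theorem le_log_two_mul_sparsityBound_add_one {m : ℝ} (hm : 2 ≤ m) :
    m ≤ log 2 * (sparsityBound m + 1) := by
  have hℓ := log_two_gt_d9
  have hlog : log 2 ≤ log m := log_le_log (by norm_num) hm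
  rw [mul_add, log_two_mul_sparsityBound]
  nlinarith

/- The right-hand side is `m ^ (5/2) * (1 + log 2 / m) ≤ m ^ (5/2) * 2 ^ (1/m)`; the correction
factor is needed at `m = 2`, where the bound is nearly tight. -/
theorem sparsityBound_add_one_lt {m : ℝ} (hm : 2 ≤ m) :
    sparsityBound m + 1 < √m ^ 5 + log 2 * √m ^ 3 := by
  have hℓ₁ : 0.693 < log 2 := lt_trans (by norm_num) log_two_gt_d9
  have hℓ₂ : log 2 < 0.6932 := lt_trans log_two_lt_d9 (by norm_num)
  have hm₀ : 0 < m := by linarith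
  have hlog_le : log m ≤ log 2 + m / 2 - 1 := by
    have h := log_le_sub_one_of_pos (show 0 < m / 2 by positivity)
    rw [log_div hm₀.ne' two_ne_zero] at h
    linarith
  obtain ⟨t, ht₀, rfl⟩ : ∃ t, 0 ≤ t ∧ t ^ 2 = m := ⟨√m, sqrt_nonneg m, sq_sqrt hm₀.le⟩
  rw [sqrt_sq ht₀]
  have ht : 1.41 ≤ t := by nlinarith
  have hu : 0 ≤ t ^ 2 - 2 := by linarith
  have hpoly : 5 / 2 * t ^ 2 * (log 2 + t ^ 2 / 2 - 1) + 2 * log 2 <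
      log 2 * t ^ 5 + log 2 ^ 2 * t ^ 3 := by
    nlinarith [mul_nonneg (sub_nonneg.2 ht) hu, mul_nonneg hu hu,
      mul_nonneg (mul_nonneg hu hu) ht₀, sq_nonneg (t - 1.41), pow_nonneg ht₀ 3]
  refine lt_of_mul_lt_mul_left ?_ (show 0 ≤ log 2 by linarith)
  calc log 2 * (sparsityBound (t ^ 2) + 1) = 5 / 2 * t ^ 2 * log (t ^ 2) + 2 * log 2 := by
        rw [mul_add, log_two_mul_sparsityBound]; ring
    _ ≤ 5 / 2 * t ^ 2 * (log 2 + t ^ 2 / 2 - 1) + 2 * log 2 := by gcongr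
    _ < log 2 * (t ^ 5 + log 2 * t ^ 3) := by linarith

theorem mul_log_sparsityBound_add_one_lt {m : ℝ} (hm : 2 ≤ m) :
    m * log (sparsityBound m + 1) < log 2 * sparsityBound m := by
  have hm₀ : 0 < m := by linarith
  have hexp : √m ^ 5 + log 2 * √m ^ 3 ≤ √m ^ 5 * exp (log 2 / m) := by
    have : √m ^ 5 + log 2 * √m ^ 3 = √m ^ 5 * (log 2 / m + 1) := by
      rw [mul_add, mul_one, add_comm, show √m ^ 5 = √m ^ 3 * √m ^ 2 by ring, sq_sqrt hm₀.le]
      field_simp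
    rw [this]
    exact mul_le_mul_of_nonneg_left (add_one_le_exp _) (by positivity)
  have hlog : log (√m ^ 5 * exp (log 2 / m)) = 5 / 2 * log m + log 2 / m := by
    rw [log_mul (by positivity) (exp_pos _).ne', log_pow, log_exp, log_sqrt hm₀.le]
    ring
  calc m * log (sparsityBound m + 1) < m * (5 / 2 * log m + log 2 / m) := by
        rw [← hlog]
        gcongr
        · linarith [sparsityBound_nonneg (by linarith : 1 ≤ m)]
        · exact (sparsityBound_add_one_lt hm).trans_le hexp
    _ = log 2 * sparsityBound m := by
        rw [log_two_mul_sparsityBound]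
        field_simp

theorem le_sparsityBound_of_two_pow_le_succ_pow {m s : ℕ} (hm : 2 ≤ m)
    (h : 2 ^ s ≤ (s + 1) ^ m) : (s : ℝ) ≤ sparsityBound m := by
  have hm' : (2 : ℝ) ≤ m := by exact_mod_cast hm
  have hlog : log 2 * s ≤ m * log (s + 1) := by
    have := log_le_log (by positivity) (by exact_mod_cast h : (2 : ℝ) ^ s ≤ ((s : ℝ) + 1) ^ m)
    rwa [log_pow, log_pow, mul_comm] at this
  by_contra! hlt
  exact hlog.not_gt <| mul_log_add_one_lt_mul_of_le (by positivity)
    (sparsityBound_nonneg (by linarith)) hlt.le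
    (le_log_two_mul_sparsityBound_add_one hm') (mul_log_sparsityBound_add_one_lt hm')

theorem boolean_system_sparse_solution_strong (m L : ℕ) (hm : 2 ≤ m)
    (A : Matrix (Fin m) (Fin L) ℕ) (hA : ∀ i j, A i j = 0 ∨ A i j = 1)
    (c : Fin m → ℕ) (h : ∃ b : Fin L → ℕ, A.mulVec b = c) :
    ∃ b : Fin L → ℕ, A.mulVec b = c ∧
      ((Finset.univ.filter (fun j => b j ≠ 0)).card : ℝ) ≤
        (5 / 2) * m * Real.logb 2 m + 1 := by
  obtain ⟨b₀, rfl⟩ := h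
  have hA₁ : ∀ i j, A i j ≤ 1 := fun i j => (hA i j).elim (fun h => h ▸ zero_le_one) le_of_eq
  obtain ⟨b, hb, hpow⟩ := exists_mulVec_eq_two_pow_card_support_le hA₁ b₀
  rw [Fintype.card_fin] at hpow
  exact ⟨b, hb, le_sparsityBound_of_two_pow_le_succ_pow hm hpow⟩
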